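/- Let n be a positive integer. Define g : ℝⁿ → ℝ by g(x) = ∑ i, |x i| / (2 + 2|x i|). Then for every fixed u ∈ ℝⁿ, the function h(x) = g(x) + (1/2)‖x - u‖² is convex on ℝⁿ. -/

import Mathlib

/-! Since `‖x - u‖² = ‖x‖² - 2⟪x, u⟫ + ‖u‖²` and the last two terms are affine in `x`,
it suffices to show that `g + ½‖·‖²` is convex. This function is separable,
`g x + ½‖x‖² = ∑ i, k |x i|` with `k s = s² / 2 + s / (2 + 2 s)`, and `k` is convex and
nondecreasing on `[0, ∞)` because `k'' s = 1 - (1 + s)⁻³ ≥ 0`; hence each `t ↦ k |t|` is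
convex. -/

open Set

theorem ConvexOn.finset_sum {𝕜 E β ι : Type*} [Semiring 𝕜] [PartialOrder 𝕜]
    [AddCommMonoid E] [AddCommMonoid β] [PartialOrder β] [IsOrderedAddMonoid β] [SMul 𝕜 E]
    [Module 𝕜 β]
    {s : Set E} (hs : Convex 𝕜 s) {t : Finset ι} {f : ι → E → β}
    (hf : ∀ i ∈ t, ConvexOn 𝕜 s (f i)) : ConvexOn 𝕜 s (fun x => ∑ i ∈ t, f i x) := by
  simpa only [← Finset.sum_apply] using
    Finset.sum_induction f (ConvexOn 𝕜 s) (fun _ _ => ConvexOn.add) (convexOn_const 0 hs) hf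

theorem EuclideanSpace.convexOn_sum_apply {ι : Type*} [Fintype ι] {f : ι → ℝ → ℝ}
    (hf : ∀ i, ConvexOn ℝ univ (f i)) :
    ConvexOn ℝ univ (fun x : EuclideanSpace ℝ ι => ∑ i, f i (x i)) :=
  ConvexOn.finset_sum convex_univ fun i _ => (hf i).comp_linearMap (EuclideanSpace.projₗ i)

theorem ConvexOn.comp_norm {E : Type*} [SeminormedAddCommGroup E] [NormedSpace ℝ E]
    {f : ℝ → ℝ} (hf : ConvexOn ℝ (Ici 0) f) (hf_mono : MonotoneOn f (Ici 0)) :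
    ConvexOn ℝ univ (fun x : E => f ‖x‖) := by
  refine ⟨convex_univ, fun x _ y _ a b ha hb hab => ?_⟩
  calc f ‖a • x + b • y‖ ≤ f (a • ‖x‖ + b • ‖y‖) :=
        hf_mono (norm_nonneg _) (hf.1 (norm_nonneg x) (norm_nonneg y) ha hb hab)
          (convexOn_univ_norm.2 trivial trivial ha hb hab)
    _ ≤ a • f ‖x‖ + b • f ‖y‖ := hf.2 (norm_nonneg x) (norm_nonneg y) ha hb hab

theorem ConvexOn.add_half_norm_sub_sq {E : Type*} [NormedAddCommGroup E] [InnerProductSpace ℝ E]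
    {f : E → ℝ} (hf : ConvexOn ℝ univ (fun x => f x + 1 / 2 * ‖x‖ ^ 2)) (u : E) :
    ConvexOn ℝ univ (fun x => f x + 1 / 2 * ‖x - u‖ ^ 2) := by
  have hlin : ConvexOn ℝ univ (fun x => -inner ℝ u x) := (-(innerₗ E u)).convexOn convex_univ
  refine ((hf.add hlin).add_const (1 / 2 * ‖u‖ ^ 2)).congr fun x _ => ?_
  simp only [Pi.add_apply, norm_sub_sq_real, real_inner_comm u x]
  ring

theorem hasDerivAt_sq_half_add_div {s : ℝ} (hs : -1 < s) :
    HasDerivAt (fun s : ℝ => s ^ 2 / 2 + s / (2 + 2 * s)) (s + 1 / (2 * (1 + s) ^ 2)) s := by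
  have hden : 2 + 2 * s ≠ 0 := by linarith
  refine (((hasDerivAt_pow 2 s).div_const 2).add
    ((hasDerivAt_id' s).div (((hasDerivAt_id' s).const_mul 2).const_add 2) hden)).congr_deriv ?_
  have : 1 + s ≠ 0 := by linarith
  field_simp
  ring

theorem hasDerivAt_add_one_div_two_mul_sq {s : ℝ} (hs : -1 < s) :
    HasDerivAt (fun s : ℝ => s + 1 / (2 * (1 + s) ^ 2)) (1 - 1 / (1 + s) ^ 3) s := by
  have : 1 + s ≠ 0 := by linarith
  refine ((hasDerivAt_id' s).add ((hasDerivAt_const s (1 : ℝ)).div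
    ((((hasDerivAt_id' s).const_add 1).pow 2).const_mul 2)
    (mul_ne_zero two_ne_zero (pow_ne_zero 2 this)))).congr_deriv ?_
  simp only [Pi.pow_apply]
  field_simp
  ring

theorem convexOn_Ici_sq_half_add_div :
    ConvexOn ℝ (Ici 0) (fun s : ℝ => s ^ 2 / 2 + s / (2 + 2 * s)) := by
  have hinterior : ∀ s ∈ interior (Ici (0 : ℝ)), 0 < s := fun s hs => by
    rwa [interior_Ici, mem_Ioi] at hs
  refine convexOn_of_hasDerivWithinAt2_nonneg (convex_Ici 0)
    (fun s hs => (hasDerivAt_sq_half_add_div (by rw [mem_Ici] at hs; linarith)).continuousAt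
      |>.continuousWithinAt)
    (fun s hs => (hasDerivAt_sq_half_add_div (by linarith [hinterior s hs])).hasDerivWithinAt)
    (fun s hs =>
      (hasDerivAt_add_one_div_two_mul_sq (by linarith [hinterior s hs])).hasDerivWithinAt)
    fun s hs => ?_
  have hcube : 1 ≤ (1 + s) ^ 3 := one_le_pow₀ (by linarith [hinterior s hs])
  rwa [sub_nonneg, div_le_one (by positivity)]

theorem monotoneOn_Ici_sq_half_add_div :
    MonotoneOn (fun s : ℝ => s ^ 2 / 2 + s / (2 + 2 * s)) (Ici 0) := by
  intro a ha b hb hab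
  rw [mem_Ici] at ha hb
  have hsq : a ^ 2 / 2 ≤ b ^ 2 / 2 := by gcongr
  have hdiv : a / (2 + 2 * a) ≤ b / (2 + 2 * b) := by
    rw [div_le_div_iff₀ (by positivity) (by positivity)]
    linarith
  exact add_le_add hsq hdiv

theorem stmt_8_general (n : ℕ)
    (g : EuclideanSpace ℝ (Fin n) → ℝ)
    (hg : ∀ x, g x = ∑ i, |x i| / (2 + 2 * |x i|))
    (u : EuclideanSpace ℝ (Fin n)) :
    ConvexOn ℝ Set.univ (fun x => g x + (1 / 2) * ‖x - u‖ ^ 2) := by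
  refine ConvexOn.add_half_norm_sub_sq ?_ u
  have hk : ConvexOn ℝ univ (fun t : ℝ => ‖t‖ ^ 2 / 2 + ‖t‖ / (2 + 2 * ‖t‖)) :=
    convexOn_Ici_sq_half_add_div.comp_norm monotoneOn_Ici_sq_half_add_div
  refine (EuclideanSpace.convexOn_sum_apply fun _ => hk).congr fun x _ => ?_
  simp only [hg, EuclideanSpace.real_norm_sq_eq, Finset.mul_sum, ← Finset.sum_add_distrib,
    Real.norm_eq_abs, sq_abs]
  refine Finset.sum_congr rfl fun i _ => ?_
  ring

theorem stmt_8 (n : ℕ) (hn : 0 < n)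
    (g : EuclideanSpace ℝ (Fin n) → ℝ)
    (hg : ∀ x, g x = ∑ i, |x i| / (2 + 2 * |x i|))
    (u : EuclideanSpace ℝ (Fin n)) :
    ConvexOn ℝ Set.univ (fun x => g x + (1 / 2) * ‖x - u‖ ^ 2) :=
  stmt_8_general n g hg u
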